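/- Suppose ‖A₁‖ ≤ R, ‖A₂‖ ≤ R, ‖b‖₂ ≤ 1, and w ∈ ℝ^m satisfies w_i² ≤ F for all i ∈ [m] for some scalar F > 0. Let x ∈ ℝ^d, C := A₂ · diag(1[A₁x]) · A₁ and W = diag(w). Then the ℓ²-operator norm of the regularized Hessian satisfies ‖Cᵀ (B(x) + W²) C‖ ≤ R⁴ · (16 + F). -/

import Mathlib

open Matrix BigOperators

noncomputable section

/-- entrywise ReLU on a Euclidean vector -/
def relu {k : ℕ} (x : EuclideanSpace ℝ (Fin k)) : EuclideanSpace ℝ (Fin k) :=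
  WithLp.toLp 2 (fun i => max 0 (x i))

/-- entrywise exponential on a Euclidean vector -/
def vexp {k : ℕ} (x : EuclideanSpace ℝ (Fin k)) : EuclideanSpace ℝ (Fin k) :=
  WithLp.toLp 2 (fun i => Real.exp (x i))

/-- matrix-vector product as a map between Euclidean spaces -/
def mulE {k l : ℕ} (A : Matrix (Fin k) (Fin l) ℝ) (x : EuclideanSpace ℝ (Fin l)) :
    EuclideanSpace ℝ (Fin k) :=
  WithLp.toLp 2 (fun i => ∑ j, A i j * x j)

/-- ℓ²-operator norm of a matrix -/
def opNorm {k l : ℕ} (A : Matrix (Fin k) (Fin l) ℝ) : ℝ :=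
  ‖LinearMap.toContinuousLinearMap (Matrix.toEuclideanLin A)‖

/-- indicator of positivity, entrywise: the vector 1[y > 0] -/
def ind {k : ℕ} (y : EuclideanSpace ℝ (Fin k)) : Fin k → ℝ :=
  fun i => if 0 < y i then 1 else 0

variable {n m d : ℕ}

/-- h(x) = φ(A₁ x) -/
def hfun (A₁ : Matrix (Fin n) (Fin d) ℝ) (x : EuclideanSpace ℝ (Fin d)) :
    EuclideanSpace ℝ (Fin n) := relu (mulE A₁ x)

/-- u(x) = exp(A₂ φ(A₁ x)) -/
def ufun (A₁ : Matrix (Fin n) (Fin d) ℝ) (A₂ : Matrix (Fin m) (Fin n) ℝ)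
    (x : EuclideanSpace ℝ (Fin d)) : EuclideanSpace ℝ (Fin m) :=
  vexp (mulE A₂ (hfun A₁ x))

/-- α(x) = ⟨u(x), 1_m⟩ -/
def afun (A₁ : Matrix (Fin n) (Fin d) ℝ) (A₂ : Matrix (Fin m) (Fin n) ℝ)
    (x : EuclideanSpace ℝ (Fin d)) : ℝ :=
  ∑ i, ufun A₁ A₂ x i

/-- f(x) = α(x)⁻¹ • u(x) -/
def ffun (A₁ : Matrix (Fin n) (Fin d) ℝ) (A₂ : Matrix (Fin m) (Fin n) ℝ)
    (x : EuclideanSpace ℝ (Fin d)) : EuclideanSpace ℝ (Fin m) :=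
  (afun A₁ A₂ x)⁻¹ • ufun A₁ A₂ x

/-- c(x) = f(x) - b -/
def cfun (A₁ : Matrix (Fin n) (Fin d) ℝ) (A₂ : Matrix (Fin m) (Fin n) ℝ)
    (b : EuclideanSpace ℝ (Fin m)) (x : EuclideanSpace ℝ (Fin d)) :
    EuclideanSpace ℝ (Fin m) :=
  ffun A₁ A₂ x - b

/-- the matrix B(x) appearing in the decomposition of the Hessian -/
def Bmat (A₁ : Matrix (Fin n) (Fin d) ℝ) (A₂ : Matrix (Fin m) (Fin n) ℝ)
    (b : EuclideanSpace ℝ (Fin m)) (x : EuclideanSpace ℝ (Fin d)) :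
    Matrix (Fin m) (Fin m) ℝ :=
  Matrix.diagonal (fun i => ffun A₁ A₂ x i * (ffun A₁ A₂ x i + cfun A₁ A₂ b x i))
  - Matrix.diagonal (fun i => ffun A₁ A₂ x i)
      * Matrix.vecMulVec (fun i => cfun A₁ A₂ b x i + ffun A₁ A₂ x i) (fun i => ffun A₁ A₂ x i)
  - Matrix.vecMulVec (fun i => ffun A₁ A₂ x i) (fun i => cfun A₁ A₂ b x i + ffun A₁ A₂ x i)
      * Matrix.diagonal (fun i => ffun A₁ A₂ x i)
  + (∑ i, (2 * cfun A₁ A₂ b x i + ffun A₁ A₂ x i) * ffun A₁ A₂ x i)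
      • Matrix.vecMulVec (fun i => ffun A₁ A₂ x i) (fun i => ffun A₁ A₂ x i)
  - (∑ i, cfun A₁ A₂ b x i * ffun A₁ A₂ x i)
      • Matrix.diagonal (fun i => ffun A₁ A₂ x i)

open scoped Matrix.Norms.L2Operator

/-- coerce a plain function into `EuclideanSpace` (definitionally the identity) -/
def toE {k : ℕ} (v : Fin k → ℝ) : EuclideanSpace ℝ (Fin k) := WithLp.toLp 2 v

lemma opNorm_eq_l2 {k l : ℕ} (A : Matrix (Fin k) (Fin l) ℝ) : opNorm A = ‖A‖ := rfl

lemma opNorm_le_bound' {k l : ℕ} (A : Matrix (Fin k) (Fin l) ℝ) {c : ℝ} (hc : 0 ≤ c)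
    (h : ∀ y : EuclideanSpace ℝ (Fin l),
      ‖((EuclideanSpace.equiv (Fin k) ℝ).symm (A *ᵥ y) : EuclideanSpace ℝ (Fin k))‖ ≤ c * ‖y‖) :
    ‖A‖ ≤ c := by
  rw [Matrix.l2_opNorm_def]
  exact ContinuousLinearMap.opNorm_le_bound _ hc (fun y => h y)

lemma coord_le_norm {k : ℕ} (v : EuclideanSpace ℝ (Fin k)) (i : Fin k) : |v i| ≤ ‖v‖ := by
  rw [EuclideanSpace.norm_eq]
  have h1 : |v i| = Real.sqrt (‖v i‖ ^ 2) := by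
    rw [Real.sqrt_sq_eq_abs]; simp
  rw [h1]
  apply Real.sqrt_le_sqrt
  exact Finset.single_le_sum (f := fun j => ‖v j‖ ^ 2) (fun j _ => sq_nonneg _)
    (Finset.mem_univ i)

lemma l2_opNorm_diagonal_le {k : ℕ} (v : Fin k → ℝ) {c : ℝ} (hc : 0 ≤ c)
    (h : ∀ i, |v i| ≤ c) : ‖(Matrix.diagonal v : Matrix (Fin k) (Fin k) ℝ)‖ ≤ c := by
  apply opNorm_le_bound' _ hc
  intro y
  rw [EuclideanSpace.norm_eq, EuclideanSpace.norm_eq]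
  rw [show c * Real.sqrt (∑ i, ‖y i‖ ^ 2) = Real.sqrt (c ^ 2 * ∑ i, ‖y i‖ ^ 2) by
    rw [Real.sqrt_mul (sq_nonneg c), Real.sqrt_sq hc]]
  apply Real.sqrt_le_sqrt
  rw [Finset.mul_sum]
  apply Finset.sum_le_sum
  intro i _
  have : ((EuclideanSpace.equiv (Fin k) ℝ).symm (Matrix.diagonal v *ᵥ y) : EuclideanSpace ℝ (Fin k)) i
      = v i * y i := by
    simp [Matrix.mulVec_diagonal]
  rw [this]
  have hvi := h i
  have : ‖v i * y i‖ ^ 2 = (v i)^2 * ‖y i‖^2 := by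
    rw [norm_mul]; rw [mul_pow]; congr 1; simp [sq_abs]
  rw [this]
  have : (v i)^2 ≤ c^2 := by nlinarith [abs_nonneg (v i), le_abs_self (v i), neg_abs_le (v i)]
  nlinarith [sq_nonneg (‖y i‖)]

lemma abs_sum_mul_le_norms {k : ℕ} (v y : Fin k → ℝ) :
    |∑ i, v i * y i| ≤ ‖toE v‖ * ‖toE y‖ := by
  have h : (∑ i, v i * y i) = inner ℝ (toE v) (toE y) := by
    rw [PiLp.inner_apply]
    simp [toE, RCLike.inner_apply, mul_comm]
  rw [h]
  exact abs_real_inner_le_norm (toE v) (toE y)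

lemma l2_opNorm_vecMulVec_le {k l : ℕ} (u : Fin k → ℝ) (v : Fin l → ℝ) :
    ‖(Matrix.vecMulVec u v : Matrix (Fin k) (Fin l) ℝ)‖ ≤ ‖toE u‖ * ‖toE v‖ := by
  apply opNorm_le_bound' _ (mul_nonneg (norm_nonneg _) (norm_nonneg _))
  intro y
  have key : ((EuclideanSpace.equiv (Fin k) ℝ).symm (Matrix.vecMulVec u v *ᵥ y)
      : EuclideanSpace ℝ (Fin k)) = (∑ j, v j * y j) • toE u := by
    ext i
    simp [toE, Matrix.vecMulVec, Matrix.mulVec, dotProduct, Finset.mul_sum, mul_assoc,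
      mul_comm, mul_left_comm]
  rw [key, norm_smul]
  have h1 : ‖(∑ j, v j * y j : ℝ)‖ ≤ ‖toE v‖ * ‖y‖ := by
    rw [Real.norm_eq_abs]; exact abs_sum_mul_le_norms v y
  calc ‖(∑ j, v j * y j : ℝ)‖ * ‖toE u‖ ≤ (‖toE v‖ * ‖y‖) * ‖toE u‖ :=
        mul_le_mul_of_nonneg_right h1 (norm_nonneg _)
    _ = ‖toE u‖ * ‖toE v‖ * ‖y‖ := by ring

lemma l2_opNorm_transpose {k l : ℕ} (A : Matrix (Fin k) (Fin l) ℝ) : ‖Aᵀ‖ = ‖A‖ := by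
  have : Aᵀ = Aᴴ := by ext i j; simp [Matrix.conjTranspose_apply]
  rw [this, Matrix.l2_opNorm_conjTranspose]

/-- if ‖A₁‖ ≤ R, ‖A₂‖ ≤ R, ‖b‖₂ ≤ 1 and w_i² ≤ F for all i, then with
C = A₂ diag(1[A₁x]) A₁ and W = diag(w), ‖Cᵀ(B(x) + W²)C‖ ≤ R⁴ (16 + F). -/
theorem statement14 (n m d : ℕ) (hn : 0 < n) (hm : 0 < m) (hd : 0 < d) (R F : ℝ)
    (A₁ : Matrix (Fin n) (Fin d) ℝ) (A₂ : Matrix (Fin m) (Fin n) ℝ)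
    (b w : EuclideanSpace ℝ (Fin m)) (x : EuclideanSpace ℝ (Fin d))
    (hA₁ : opNorm A₁ ≤ R) (hA₂ : opNorm A₂ ≤ R) (hb : ‖b‖ ≤ 1)
    (hF : 0 < F) (hw : ∀ i, w i ^ 2 ≤ F) :
    opNorm
      ((A₂ * Matrix.diagonal (ind (mulE A₁ x)) * A₁)ᵀ
        * (Bmat A₁ A₂ b x + Matrix.diagonal (fun i => w i ^ 2))
        * (A₂ * Matrix.diagonal (ind (mulE A₁ x)) * A₁)) ≤
      R ^ 4 * (16 + F) := by
  rw [opNorm_eq_l2] at hA₁ hA₂ ⊢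
  have hR0 : 0 ≤ R := le_trans (norm_nonneg A₁) hA₁
  -- basic facts about f
  set f : EuclideanSpace ℝ (Fin m) := ffun A₁ A₂ x with hfdef
  set c : EuclideanSpace ℝ (Fin m) := cfun A₁ A₂ b x with hcdef
  have hmne : (Finset.univ : Finset (Fin m)).Nonempty := by
    haveI : Nonempty (Fin m) := Fin.pos_iff_nonempty.mp hm
    exact Finset.univ_nonempty
  have hupos : ∀ i, 0 < ufun A₁ A₂ x i := fun i => Real.exp_pos _
  have hα : 0 < afun A₁ A₂ x :=
    Finset.sum_pos (fun i _ => hupos i) hmne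
  have hf0 : ∀ i, 0 ≤ f i := by
    intro i
    have : f i = (afun A₁ A₂ x)⁻¹ * ufun A₁ A₂ x i := rfl
    rw [this]
    exact mul_nonneg (inv_nonneg.mpr hα.le) (hupos i).le
  have hf1 : ∀ i, f i ≤ 1 := by
    intro i
    have hle : ufun A₁ A₂ x i ≤ afun A₁ A₂ x :=
      Finset.single_le_sum (fun j _ => (hupos j).le) (Finset.mem_univ i)
    have : f i = (afun A₁ A₂ x)⁻¹ * ufun A₁ A₂ x i := rfl
    rw [this]
    calc (afun A₁ A₂ x)⁻¹ * ufun A₁ A₂ x i ≤ (afun A₁ A₂ x)⁻¹ * afun A₁ A₂ x :=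
          mul_le_mul_of_nonneg_left hle (inv_nonneg.mpr hα.le)
      _ = 1 := inv_mul_cancel₀ hα.ne'
  have hsum : ∑ i, f i = 1 := by
    have : ∑ i, f i = (afun A₁ A₂ x)⁻¹ * ∑ i, ufun A₁ A₂ x i := by
      rw [Finset.mul_sum]; rfl
    rw [this]
    exact inv_mul_cancel₀ hα.ne'
  have hfn : ‖f‖ ≤ 1 := by
    rw [EuclideanSpace.norm_eq]
    rw [show (1 : ℝ) = Real.sqrt 1 by simp]
    apply Real.sqrt_le_sqrt
    rw [← hsum]
    apply Finset.sum_le_sum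
    intro i _
    have : ‖f i‖ ^ 2 = f i * f i := by
      rw [Real.norm_eq_abs, sq_abs]; ring
    rw [this]
    nlinarith [hf0 i, hf1 i]
  have hcn : ‖c‖ ≤ 2 := by
    have : c = f - b := rfl
    rw [this]
    calc ‖f - b‖ ≤ ‖f‖ + ‖b‖ := norm_sub_le f b
      _ ≤ 1 + 1 := add_le_add hfn hb
      _ = 2 := by norm_num
  have hfabs : ∀ i, |f i| ≤ 1 := fun i => abs_le.mpr ⟨by linarith [hf0 i], hf1 i⟩
  have hcabs : ∀ i, |c i| ≤ 2 := fun i => le_trans (coord_le_norm c i) hcn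
  -- norms of auxiliary vectors
  have hcf : ‖toE (fun i => c i + f i)‖ ≤ 3 := by
    have : toE (fun i => c i + f i) = c + f := rfl
    rw [this]
    calc ‖c + f‖ ≤ ‖c‖ + ‖f‖ := norm_add_le c f
      _ ≤ 2 + 1 := add_le_add hcn hfn
      _ = 3 := by norm_num
  have h2cf : ‖toE (fun i => 2 * c i + f i)‖ ≤ 5 := by
    have : toE (fun i => 2 * c i + f i) = (2 : ℝ) • c + f := by
      ext i; simp [toE]
    rw [this]
    calc ‖(2:ℝ) • c + f‖ ≤ ‖(2:ℝ) • c‖ + ‖f‖ := norm_add_le _ _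
      _ = 2 * ‖c‖ + ‖f‖ := by rw [norm_smul]; norm_num
      _ ≤ 2 * 2 + 1 := by have := hcn; have := hfn; linarith
      _ = 5 := by norm_num
  -- bound each term of Bmat
  have hD1 : ‖(Matrix.diagonal (fun i => f i * (f i + c i)) : Matrix (Fin m) (Fin m) ℝ)‖ ≤ 3 := by
    apply l2_opNorm_diagonal_le _ (by norm_num)
    intro i
    rw [abs_mul]
    calc |f i| * |f i + c i| ≤ 1 * (|f i| + |c i|) :=
          mul_le_mul (hfabs i) (abs_add_le _ _) (abs_nonneg _) (by norm_num)
      _ ≤ 1 * (1 + 2) := by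
          have := hfabs i; have := hcabs i; nlinarith
      _ = 3 := by norm_num
  have hDf : ‖(Matrix.diagonal (fun i => f i) : Matrix (Fin m) (Fin m) ℝ)‖ ≤ 1 :=
    l2_opNorm_diagonal_le _ (by norm_num) hfabs
  have hV2 : ‖(Matrix.vecMulVec (fun i => c i + f i) (fun i => f i) :
      Matrix (Fin m) (Fin m) ℝ)‖ ≤ 3 := by
    calc ‖(Matrix.vecMulVec (fun i => c i + f i) (fun i => f i) : Matrix (Fin m) (Fin m) ℝ)‖
        ≤ ‖toE (fun i => c i + f i)‖ *
          ‖toE (fun i => f i)‖ := l2_opNorm_vecMulVec_le _ _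
      _ ≤ 3 * 1 := by
          exact mul_le_mul hcf hfn (norm_nonneg _) (by norm_num)
      _ = 3 := by norm_num
  have hV3 : ‖(Matrix.vecMulVec (fun i => f i) (fun i => c i + f i) :
      Matrix (Fin m) (Fin m) ℝ)‖ ≤ 3 := by
    calc ‖(Matrix.vecMulVec (fun i => f i) (fun i => c i + f i) : Matrix (Fin m) (Fin m) ℝ)‖
        ≤ ‖toE (fun i => f i)‖ *
          ‖toE (fun i => c i + f i)‖ := l2_opNorm_vecMulVec_le _ _
      _ ≤ 1 * 3 := mul_le_mul hfn hcf (norm_nonneg _) (by norm_num)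
      _ = 3 := by norm_num
  have hV4 : ‖(Matrix.vecMulVec (fun i => f i) (fun i => f i) :
      Matrix (Fin m) (Fin m) ℝ)‖ ≤ 1 := by
    calc ‖(Matrix.vecMulVec (fun i => f i) (fun i => f i) : Matrix (Fin m) (Fin m) ℝ)‖
        ≤ ‖toE (fun i => f i)‖ *
          ‖toE (fun i => f i)‖ := l2_opNorm_vecMulVec_le _ _
      _ ≤ 1 * 1 := mul_le_mul hfn hfn (norm_nonneg _) (by norm_num)
      _ = 1 := by norm_num
  have hs4 : |∑ i, (2 * c i + f i) * f i| ≤ 5 := by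
    calc |∑ i, (2 * c i + f i) * f i|
        ≤ ‖toE (fun i => 2 * c i + f i)‖ * ‖f‖ :=
          abs_sum_mul_le_norms _ f
      _ ≤ 5 * 1 := mul_le_mul h2cf hfn (norm_nonneg _) (by norm_num)
      _ = 5 := by norm_num
  have hs5 : |∑ i, c i * f i| ≤ 2 := by
    calc |∑ i, c i * f i| ≤ ‖c‖ * ‖f‖ := abs_sum_mul_le_norms c f
      _ ≤ 2 * 1 := mul_le_mul hcn hfn (norm_nonneg _) (by norm_num)
      _ = 2 := by norm_num
  have hB : ‖Bmat A₁ A₂ b x‖ ≤ 16 := by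
    rw [Bmat, ← hfdef, ← hcdef]
    have t2 : ‖Matrix.diagonal (fun i => f i) *
        Matrix.vecMulVec (fun i => c i + f i) (fun i => f i)‖ ≤ 3 := by
      calc ‖Matrix.diagonal (fun i => f i) *
            Matrix.vecMulVec (fun i => c i + f i) (fun i => f i)‖
          ≤ ‖(Matrix.diagonal (fun i => f i) : Matrix (Fin m) (Fin m) ℝ)‖ *
            ‖(Matrix.vecMulVec (fun i => c i + f i) (fun i => f i) :
              Matrix (Fin m) (Fin m) ℝ)‖ := Matrix.l2_opNorm_mul _ _
        _ ≤ 1 * 3 := mul_le_mul hDf hV2 (norm_nonneg _) (by norm_num)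
        _ = 3 := by norm_num
    have t3 : ‖Matrix.vecMulVec (fun i => f i) (fun i => c i + f i) *
        Matrix.diagonal (fun i => f i)‖ ≤ 3 := by
      calc ‖Matrix.vecMulVec (fun i => f i) (fun i => c i + f i) *
            Matrix.diagonal (fun i => f i)‖
          ≤ ‖(Matrix.vecMulVec (fun i => f i) (fun i => c i + f i) :
              Matrix (Fin m) (Fin m) ℝ)‖ *
            ‖(Matrix.diagonal (fun i => f i) : Matrix (Fin m) (Fin m) ℝ)‖ :=
            Matrix.l2_opNorm_mul _ _
        _ ≤ 3 * 1 := mul_le_mul hV3 hDf (norm_nonneg _) (by norm_num)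
        _ = 3 := by norm_num
    have t4 : ‖(∑ i, (2 * c i + f i) * f i) •
        Matrix.vecMulVec (fun i => f i) (fun i => f i)‖ ≤ 5 := by
      rw [norm_smul, Real.norm_eq_abs]
      calc |∑ i, (2 * c i + f i) * f i| *
            ‖(Matrix.vecMulVec (fun i => f i) (fun i => f i) : Matrix (Fin m) (Fin m) ℝ)‖
          ≤ 5 * 1 := mul_le_mul hs4 hV4 (norm_nonneg _) (by norm_num)
        _ = 5 := by norm_num
    have t5 : ‖(∑ i, c i * f i) • Matrix.diagonal (fun i => f i)‖ ≤ 2 := by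
      rw [norm_smul, Real.norm_eq_abs]
      calc |∑ i, c i * f i| *
            ‖(Matrix.diagonal (fun i => f i) : Matrix (Fin m) (Fin m) ℝ)‖
          ≤ 2 * 1 := mul_le_mul hs5 hDf (norm_nonneg _) (by norm_num)
        _ = 2 := by norm_num
    calc ‖Matrix.diagonal (fun i => f i * (f i + c i))
          - Matrix.diagonal (fun i => f i) *
              Matrix.vecMulVec (fun i => c i + f i) (fun i => f i)
          - Matrix.vecMulVec (fun i => f i) (fun i => c i + f i) *
              Matrix.diagonal (fun i => f i)
          + (∑ i, (2 * c i + f i) * f i) •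
              Matrix.vecMulVec (fun i => f i) (fun i => f i)
          - (∑ i, c i * f i) • Matrix.diagonal (fun i => f i)‖
        ≤ ‖Matrix.diagonal (fun i => f i * (f i + c i))
          - Matrix.diagonal (fun i => f i) *
              Matrix.vecMulVec (fun i => c i + f i) (fun i => f i)
          - Matrix.vecMulVec (fun i => f i) (fun i => c i + f i) *
              Matrix.diagonal (fun i => f i)
          + (∑ i, (2 * c i + f i) * f i) •
              Matrix.vecMulVec (fun i => f i) (fun i => f i)‖ +
          ‖(∑ i, c i * f i) • Matrix.diagonal (fun i => f i)‖ := norm_sub_le _ _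
      _ ≤ (‖Matrix.diagonal (fun i => f i * (f i + c i))
          - Matrix.diagonal (fun i => f i) *
              Matrix.vecMulVec (fun i => c i + f i) (fun i => f i)
          - Matrix.vecMulVec (fun i => f i) (fun i => c i + f i) *
              Matrix.diagonal (fun i => f i)‖ +
          ‖(∑ i, (2 * c i + f i) * f i) •
              Matrix.vecMulVec (fun i => f i) (fun i => f i)‖) +
          ‖(∑ i, c i * f i) • Matrix.diagonal (fun i => f i)‖ := by
          gcongr
          exact norm_add_le _ _
      _ ≤ ((‖Matrix.diagonal (fun i => f i * (f i + c i))
          - Matrix.diagonal (fun i => f i) *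
              Matrix.vecMulVec (fun i => c i + f i) (fun i => f i)‖ +
          ‖Matrix.vecMulVec (fun i => f i) (fun i => c i + f i) *
              Matrix.diagonal (fun i => f i)‖) +
          ‖(∑ i, (2 * c i + f i) * f i) •
              Matrix.vecMulVec (fun i => f i) (fun i => f i)‖) +
          ‖(∑ i, c i * f i) • Matrix.diagonal (fun i => f i)‖ := by
          gcongr
          exact norm_sub_le _ _
      _ ≤ (((‖(Matrix.diagonal (fun i => f i * (f i + c i)) :
              Matrix (Fin m) (Fin m) ℝ)‖ +
          ‖Matrix.diagonal (fun i => f i) *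
              Matrix.vecMulVec (fun i => c i + f i) (fun i => f i)‖) +
          ‖Matrix.vecMulVec (fun i => f i) (fun i => c i + f i) *
              Matrix.diagonal (fun i => f i)‖) +
          ‖(∑ i, (2 * c i + f i) * f i) •
              Matrix.vecMulVec (fun i => f i) (fun i => f i)‖) +
          ‖(∑ i, c i * f i) • Matrix.diagonal (fun i => f i)‖ := by
          gcongr
          exact norm_sub_le _ _
      _ ≤ (((3 + 3) + 3) + 5) + 2 :=
          add_le_add (add_le_add (add_le_add (add_le_add hD1 t2) t3) t4) t5
      _ = 16 := by norm_num
  -- bound on W²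
  have hW : ‖(Matrix.diagonal (fun i => w i ^ 2) : Matrix (Fin m) (Fin m) ℝ)‖ ≤ F := by
    apply l2_opNorm_diagonal_le _ hF.le
    intro i
    rw [abs_of_nonneg (sq_nonneg _)]
    exact hw i
  have hM : ‖Bmat A₁ A₂ b x + Matrix.diagonal (fun i => w i ^ 2)‖ ≤ 16 + F :=
    le_trans (norm_add_le _ _) (add_le_add hB hW)
  -- bound on C
  have hD : ‖(Matrix.diagonal (ind (mulE A₁ x)) : Matrix (Fin n) (Fin n) ℝ)‖ ≤ 1 := by
    apply l2_opNorm_diagonal_le _ (by norm_num)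
    intro i
    unfold ind
    split <;> norm_num
  have hC : ‖A₂ * Matrix.diagonal (ind (mulE A₁ x)) * A₁‖ ≤ R ^ 2 := by
    calc ‖A₂ * Matrix.diagonal (ind (mulE A₁ x)) * A₁‖
        ≤ ‖A₂ * Matrix.diagonal (ind (mulE A₁ x))‖ * ‖A₁‖ := Matrix.l2_opNorm_mul _ _
      _ ≤ (‖A₂‖ * ‖(Matrix.diagonal (ind (mulE A₁ x)) : Matrix (Fin n) (Fin n) ℝ)‖) * ‖A₁‖ := by
          gcongr
          exact Matrix.l2_opNorm_mul _ _
      _ ≤ (R * 1) * R :=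
          mul_le_mul (mul_le_mul hA₂ hD (norm_nonneg _) hR0) hA₁ (norm_nonneg _)
            (mul_nonneg hR0 zero_le_one)
      _ = R ^ 2 := by ring
  -- put it together
  set C := A₂ * Matrix.diagonal (ind (mulE A₁ x)) * A₁ with hCdef
  set M := Bmat A₁ A₂ b x + Matrix.diagonal (fun i => w i ^ 2) with hMdef
  have h1 : ‖Cᵀ * M * C‖ ≤ ‖Cᵀ * M‖ * ‖C‖ := Matrix.l2_opNorm_mul _ _
  have h2 : ‖Cᵀ * M‖ ≤ ‖Cᵀ‖ * ‖M‖ := Matrix.l2_opNorm_mul _ _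
  have h3 : ‖Cᵀ‖ = ‖C‖ := l2_opNorm_transpose C
  have hCn : 0 ≤ ‖C‖ := norm_nonneg _
  have hMn : 0 ≤ ‖M‖ := norm_nonneg _
  have hF16 : (0:ℝ) ≤ 16 + F := by linarith
  calc ‖Cᵀ * M * C‖ ≤ ‖Cᵀ * M‖ * ‖C‖ := h1
    _ ≤ (‖Cᵀ‖ * ‖M‖) * ‖C‖ := mul_le_mul_of_nonneg_right h2 hCn
    _ = ‖C‖ * ‖M‖ * ‖C‖ := by rw [h3]
    _ ≤ R ^ 2 * (16 + F) * R ^ 2 :=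
        mul_le_mul (mul_le_mul hC hM hMn (sq_nonneg R)) hC hCn
          (mul_nonneg (sq_nonneg R) hF16)
    _ = R ^ 4 * (16 + F) := by ring

end
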